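/- arXiv:2003.06811 — 5 statements merged into one kernel-verified Lean document; each statement's English description precedes it below -/
import Mathlib

section
/- Let d_u, d_s ≥ 1, η ∈ (0,1), κ > 0. Equip ℝ^{d_u} and ℝ^{d_s} with Euclidean norms and ℝ^{d_u}×ℝ^{d_s} with the norm ‖(x,y)‖ = (‖x‖² + ‖y‖²)^{1/2}; matrix norms are operator norms. Let M : ℝ^{d_u}×ℝ^{d_s} → ℝ^{d_u}×ℝ^{d_s} be an invertible linear map with block form M(x,y) = (Ax + By, Cx + Ey). Assume: (i) for every (x,y) with ‖x‖ ≤ ‖y‖, writing (x',y') = M(x,y), one has ‖x'‖ ≤ η‖y'‖ and ‖(x',y')‖ ≥ κ‖(x,y)‖; (ii) for every (x,y) such that M(x,y) = (u,s) with ‖s‖ ≤ ‖u‖, one has ‖y‖ ≤ η‖x‖. Then for every d_u×d_s real matrix U with ‖U‖ ≤ 1: the d_s×d_s matrix CU + E is invertible with ‖(CU+E)v‖ ≥ (κ/√(1+η²))‖v‖ for all v ∈ ℝ^{d_s}, and ‖(AU+B)(CU+E)^{-1}‖ ≤ η. In particular E is invertible, ‖E^{-1}‖ ≤ √(1+η²)/κ,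 and ‖E^{-1}C‖ ≤ η. -/
lemma statement4_aux {du ds : ℕ} (η κ : ℝ)
    (hη : η ∈ Set.Ioo (0 : ℝ) 1) (hκ : 0 < κ)
    (A : EuclideanSpace ℝ (Fin du) →L[ℝ] EuclideanSpace ℝ (Fin du))
    (B : EuclideanSpace ℝ (Fin ds) →L[ℝ] EuclideanSpace ℝ (Fin du))
    (C : EuclideanSpace ℝ (Fin du) →L[ℝ] EuclideanSpace ℝ (Fin ds))
    (E : EuclideanSpace ℝ (Fin ds) →L[ℝ] EuclideanSpace ℝ (Fin ds))
    (h1 : ∀ x y, ‖x‖ ≤ ‖y‖ →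
      ‖A x + B y‖ ≤ η * ‖C x + E y‖ ∧
      κ * Real.sqrt (‖x‖ ^ 2 + ‖y‖ ^ 2) ≤ Real.sqrt (‖A x + B y‖ ^ 2 + ‖C x + E y‖ ^ 2))
    (U : EuclideanSpace ℝ (Fin ds) →L[ℝ] EuclideanSpace ℝ (Fin du)) (hU : ‖U‖ ≤ 1) :
    Function.Bijective ⇑(C.comp U + E) ∧
    (∀ v, (κ / Real.sqrt (1 + η ^ 2)) * ‖v‖ ≤ ‖(C.comp U + E) v‖) ∧
    (∀ v w, (C.comp U + E) w = v → ‖(A.comp U + B) w‖ ≤ η * ‖v‖) := by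
  have hs : 0 < Real.sqrt (1 + η ^ 2) := Real.sqrt_pos.2 (by positivity)
  have hUle : ∀ v : EuclideanSpace ℝ (Fin ds), ‖U v‖ ≤ ‖v‖ := fun v =>
    (U.le_opNorm v).trans (by nlinarith [norm_nonneg v])
  have hlow : ∀ v, (κ / Real.sqrt (1 + η ^ 2)) * ‖v‖ ≤ ‖(C.comp U + E) v‖ := by
    intro v
    obtain ⟨ha, hb⟩ := h1 (U v) v (hUle v)
    set z := ‖C (U v) + E v‖ with hz
    have hz0 : 0 ≤ z := norm_nonneg _
    have h3 : Real.sqrt (‖A (U v) + B v‖ ^ 2 + ‖C (U v) + E v‖ ^ 2)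
        ≤ Real.sqrt (1 + η ^ 2) * z := by
      rw [show Real.sqrt (1 + η ^ 2) * z = Real.sqrt ((1 + η ^ 2) * z ^ 2) by
        rw [Real.sqrt_mul (by positivity), Real.sqrt_sq hz0]]
      apply Real.sqrt_le_sqrt
      nlinarith [norm_nonneg (A (U v) + B v), hη.1.le]
    have h4' : ‖v‖ ≤ Real.sqrt (‖U v‖ ^ 2 + ‖v‖ ^ 2) := by
      have := Real.sqrt_le_sqrt
        (show ‖v‖ ^ 2 ≤ ‖U v‖ ^ 2 + ‖v‖ ^ 2 by nlinarith [sq_nonneg ‖U v‖])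
      rwa [Real.sqrt_sq (norm_nonneg v)] at this
    have h5 : κ * ‖v‖ ≤ Real.sqrt (1 + η ^ 2) * z :=
      le_trans (mul_le_mul_of_nonneg_left h4' hκ.le) (hb.trans h3)
    have heq : (C.comp U + E) v = C (U v) + E v := by simp
    rw [heq, ← hz, div_mul_eq_mul_div, div_le_iff₀ hs]
    linarith
  have hinj : Function.Injective ⇑(C.comp U + E) := by
    intro a b hab
    have h0 : (C.comp U + E) (a - b) = 0 := by rw [map_sub, hab, sub_self]
    have hl := hlow (a - b)
    rw [h0, norm_zero] at hl
    have hpos : 0 < κ / Real.sqrt (1 + η ^ 2) := by positivity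
    have hn : ‖a - b‖ = 0 :=
      le_antisymm (by nlinarith [norm_nonneg (a - b)]) (norm_nonneg _)
    exact sub_eq_zero.mp (norm_eq_zero.mp hn)
  have hsurj : Function.Surjective ⇑(C.comp U + E) :=
    LinearMap.injective_iff_surjective.mp hinj
  refine ⟨⟨hinj, hsurj⟩, hlow, ?_⟩
  intro v w hw
  obtain ⟨ha, -⟩ := h1 (U w) w (hUle w)
  have heq : (C.comp U + E) w = C (U w) + E w := by simp
  have heq2 : (A.comp U + B) w = A (U w) + B w := by simp
  rw [heq2]
  rw [heq] at hw
  rw [hw] at ha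
  exact ha

/-- hyperbolicity estimates for a block linear map preserving cones. -/
theorem statement4 {du ds : ℕ} (hdu : 0 < du) (hds : 0 < ds) (η κ : ℝ)
    (hη : η ∈ Set.Ioo (0 : ℝ) 1) (hκ : 0 < κ)
    (A : EuclideanSpace ℝ (Fin du) →L[ℝ] EuclideanSpace ℝ (Fin du))
    (B : EuclideanSpace ℝ (Fin ds) →L[ℝ] EuclideanSpace ℝ (Fin du))
    (C : EuclideanSpace ℝ (Fin du) →L[ℝ] EuclideanSpace ℝ (Fin ds))
    (E : EuclideanSpace ℝ (Fin ds) →L[ℝ] EuclideanSpace ℝ (Fin ds))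
    -- `M` is invertible
    (hbij : Function.Bijective
      (fun p : EuclideanSpace ℝ (Fin du) × EuclideanSpace ℝ (Fin ds) =>
        (A p.1 + B p.2, C p.1 + E p.2)))
    -- (i) the stable cone `{‖x‖ ≤ ‖y‖}` is mapped into the `η`-stable cone and vectors in it
    -- are expanded by the factor `κ` (in the `ℓ²` product norm)
    (h1 : ∀ x y, ‖x‖ ≤ ‖y‖ →
      ‖A x + B y‖ ≤ η * ‖C x + E y‖ ∧
      κ * Real.sqrt (‖x‖ ^ 2 + ‖y‖ ^ 2) ≤ Real.sqrt (‖A x + B y‖ ^ 2 + ‖C x + E y‖ ^ 2))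
    -- (ii) the preimage of the unstable cone `{‖s‖ ≤ ‖u‖}` lies in the `η`-unstable cone
    (h2 : ∀ x y, ‖C x + E y‖ ≤ ‖A x + B y‖ → ‖y‖ ≤ η * ‖x‖)
    (U : EuclideanSpace ℝ (Fin ds) →L[ℝ] EuclideanSpace ℝ (Fin du)) (hU : ‖U‖ ≤ 1) :
    Function.Bijective ⇑(C.comp U + E) ∧
    (∀ v, (κ / Real.sqrt (1 + η ^ 2)) * ‖v‖ ≤ ‖(C.comp U + E) v‖) ∧
    (∀ v w, (C.comp U + E) w = v → ‖(A.comp U + B) w‖ ≤ η * ‖v‖) ∧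
    Function.Bijective ⇑E ∧
    (∀ v w, E w = v → ‖w‖ ≤ (Real.sqrt (1 + η ^ 2) / κ) * ‖v‖) ∧
    (∀ x w, E w = C x → ‖w‖ ≤ η * ‖x‖) := by
  obtain ⟨hbijU, hlowU, hgraphU⟩ := statement4_aux η κ hη hκ A B C E h1 U hU
  obtain ⟨hbij0, hlow0, -⟩ := statement4_aux η κ hη hκ A B C E h1 0 (by simp)
  have hE0 : C.comp (0 : EuclideanSpace ℝ (Fin ds) →L[ℝ] EuclideanSpace ℝ (Fin du)) + E = E := by
    ext v; simp
  rw [hE0] at hbij0 hlow0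
  have hs : 0 < Real.sqrt (1 + η ^ 2) := Real.sqrt_pos.2 (by positivity)
  refine ⟨hbijU, hlowU, hgraphU, hbij0, ?_, ?_⟩
  · intro v w hw
    have := hlow0 w
    rw [hw] at this
    rw [div_mul_eq_mul_div, div_le_iff₀ hs] at this
    rw [div_mul_eq_mul_div, le_div_iff₀ hκ]
    nlinarith
  · intro x w hw
    have h0 : ‖C (-x) + E w‖ ≤ ‖A (-x) + B w‖ := by
      rw [map_neg, hw, neg_add_cancel, norm_zero]
      exact norm_nonneg _
    have := h2 (-x) w h0
    rwa [norm_neg] at this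
end

section
/- Let q ≥ 1 be an integer and A ≥ 0, σ ∈ (0,1]. Let Φ : ℝ^{d_u}×ℝ^{d_s} → ℝ^{d_s} be C^q in the second variable s, with the pointwise operator norm of the partial Jacobian ∂_s Φ bounded by σ everywhere, and with the norms of all iterated Fréchet derivatives in s of order between 2 and q bounded by A everywhere. Let γ : ℝ^{d_u} → ℝ^{d_u'} be any map and set Ψ(u,s) := (γ(u), Φ(u,s)). Let φ : ℝ^{d_u'}×ℝ^{d_s} → ℂ be C^q in its second variable y with all iterated derivatives in y up to order q bounded. Then there is a constant C depending only on q, d_s, and A (in particular independent of σ and φ) such that sup_{u,s} ‖D_s^q (φ∘Ψ)(u,s)‖ ≤ σ^q · sup_{u',y} ‖D_y^q φ(u',y)‖ + C · max_{1≤k≤q−1} sup_{u',y} ‖D_y^k φ(u',y)‖, where D_s^q and D_y^k denote iterated Fréchet derivatives in the indicated variables with multilinear-map norms. -/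
/-!
By the Faà di Bruno formula, `D^q (g ∘ f)` is a sum over the ordered partitions `c` of `{0,…,q-1}`
of `D^{|c|} g` applied to the derivatives of `f` of the orders of the parts of `c`. Only the
partition into singletons involves `D^q g`, and it contributes at most `‖D^q g‖ ‖Df‖^q ≤ σ^q ‖D^q g‖`.
Every other partition has fewer than `q` parts, so it involves a derivative of `g` of order between
`1` and `q - 1`, multiplied by at most `q` derivatives of `f`, each of norm at most `max 1 A`.
-/

open Set

namespace OrderedFinpartition

theorem eq_atomic_of_length_eq {n : ℕ} (c : OrderedFinpartition n) (h : c.length = n) :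
    c = atomic n := by
  have hsum : ∑ i, c.partSize i = n := by
    simpa using Fintype.card_congr c.equivSigma
  have hsize : ∀ i, c.partSize i = 1 := by
    have hone : ∑ _i : Fin c.length, 1 = ∑ i, c.partSize i := by simp [hsum, h]
    simpa [eq_comm] using (Finset.sum_eq_sum_iff_of_le fun i _ => c.partSize_pos i).1 hone
  rcases c with ⟨l, ps, pos, emb, _, hparts, _, _⟩
  obtain rfl : l = n := h
  obtain rfl : ps = fun _ => 1 := funext hsize
  -- a strictly monotone self-map of `Fin n` is the identity
  have hid : (fun m => emb m ⟨0, pos m⟩) = id := by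
    apply (StrictMono.range_inj hparts strictMono_id).mp
    rw [range_id]
    exact (Finite.injective_iff_surjective.mp hparts.injective).range_eq
  obtain rfl : emb = fun m _ => m := by
    funext m j
    rw [Subsingleton.elim j ⟨0, pos m⟩]
    exact congrFun hid m
  rfl

end OrderedFinpartition

namespace FormalMultilinearSeries

variable {𝕜 E F G : Type*} [NontriviallyNormedField 𝕜]
  [NormedAddCommGroup E] [NormedSpace 𝕜 E] [NormedAddCommGroup F] [NormedSpace 𝕜 F]
  [NormedAddCommGroup G] [NormedSpace 𝕜 G]
  (q : FormalMultilinearSeries 𝕜 F G) (p : FormalMultilinearSeries 𝕜 E F)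

theorem norm_compAlongOrderedFinpartition_atomic_le (n : ℕ) :
    ‖q.compAlongOrderedFinpartition p (OrderedFinpartition.atomic n)‖ ≤ ‖q n‖ * ‖p 1‖ ^ n := by
  have h := (OrderedFinpartition.atomic n).norm_compAlongOrderedFinpartition_le (q n) fun _ => p 1
  exact h.trans_eq (by rw [← Fin.prod_const]; rfl)

theorem norm_compAlongOrderedFinpartition_le_of_ne_atomic {n : ℕ} {σ A T : ℝ}
    (hσ : σ ≤ 1) (hp1 : ‖p 1‖ ≤ σ) (hp : ∀ k, 2 ≤ k → k ≤ n → ‖p k‖ ≤ A)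
    (hq : ∀ k, 1 ≤ k → k < n → ‖q k‖ ≤ T)
    {c : OrderedFinpartition n} (hc : c ≠ OrderedFinpartition.atomic n) :
    ‖q.compAlongOrderedFinpartition p c‖ ≤ max 1 A ^ n * T := by
  have hlt : c.length < n := c.length_le.lt_of_ne (mt c.eq_atomic_of_length_eq hc)
  have hqc : ‖q c.length‖ ≤ T := hq _ (c.length_pos (by omega)) hlt
  have hpart : ∀ i, ‖p (c.partSize i)‖ ≤ max 1 A := by
    intro i
    obtain h1 | h2 : c.partSize i = 1 ∨ 2 ≤ c.partSize i := by
      have := c.partSize_pos i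
      omega
    · rw [h1]
      exact hp1.trans (hσ.trans (le_max_left 1 A))
    · exact (hp _ h2 (c.partSize_le i)).trans (le_max_right 1 A)
  calc ‖q.compAlongOrderedFinpartition p c‖
      ≤ ‖q c.length‖ * ∏ i, ‖p (c.partSize i)‖ :=
        c.norm_compAlongOrderedFinpartition_le _ _
    _ ≤ T * max 1 A ^ c.length := by
        gcongr
        · exact (norm_nonneg _).trans hqc
        · exact (Finset.prod_le_prod (fun i _ => norm_nonneg _) fun i _ => hpart i).trans_eq
            (by simp)
    _ ≤ T * max 1 A ^ n := by
        gcongr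
        exacts [(norm_nonneg _).trans hqc, le_max_left 1 A]
    _ = max 1 A ^ n * T := mul_comm _ _

theorem norm_taylorComp_le_of_contraction {n : ℕ} {σ A M T : ℝ}
    (hσ : σ ≤ 1) (hp1 : ‖p 1‖ ≤ σ) (hp : ∀ k, 2 ≤ k → k ≤ n → ‖p k‖ ≤ A)
    (hqn : ‖q n‖ ≤ M) (hq : ∀ k, 1 ≤ k → k < n → ‖q k‖ ≤ T) (hT : 0 ≤ T) :
    ‖q.taylorComp p n‖ ≤
      σ ^ n * M + Fintype.card (OrderedFinpartition n) * max 1 A ^ n * T := by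
  classical
  set a := OrderedFinpartition.atomic n
  have hatomic : ‖q.compAlongOrderedFinpartition p a‖ ≤ σ ^ n * M :=
    calc ‖q.compAlongOrderedFinpartition p a‖ ≤ ‖q n‖ * ‖p 1‖ ^ n :=
          q.norm_compAlongOrderedFinpartition_atomic_le p n
      _ ≤ M * σ ^ n := by gcongr; exact (norm_nonneg _).trans hqn
      _ = σ ^ n * M := mul_comm _ _
  have hrest : ‖∑ c ∈ Finset.univ.erase a, q.compAlongOrderedFinpartition p c‖ ≤
      Fintype.card (OrderedFinpartition n) * max 1 A ^ n * T :=
    calc ‖∑ c ∈ Finset.univ.erase a, q.compAlongOrderedFinpartition p c‖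
        ≤ ∑ c ∈ Finset.univ.erase a, ‖q.compAlongOrderedFinpartition p c‖ := norm_sum_le _ _
      _ ≤ ∑ _c ∈ Finset.univ.erase a, max 1 A ^ n * T := Finset.sum_le_sum fun c hc =>
          q.norm_compAlongOrderedFinpartition_le_of_ne_atomic p hσ hp1 hp hq
            (Finset.ne_of_mem_erase hc)
      _ ≤ Fintype.card (OrderedFinpartition n) * (max 1 A ^ n * T) := by
          rw [Finset.sum_const, nsmul_eq_mul]
          gcongr
          exact_mod_cast Finset.card_erase_le
      _ = Fintype.card (OrderedFinpartition n) * max 1 A ^ n * T := (mul_assoc _ _ _).symm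
  rw [FormalMultilinearSeries.taylorComp, ← Finset.add_sum_erase _ _ (Finset.mem_univ a)]
  exact (norm_add_le _ _).trans (add_le_add hatomic hrest)

end FormalMultilinearSeries

theorem norm_iteratedFDeriv_comp_le_of_contraction {𝕜 E F G : Type*} [NontriviallyNormedField 𝕜]
    [NormedAddCommGroup E] [NormedSpace 𝕜 E] [NormedAddCommGroup F] [NormedSpace 𝕜 F]
    [NormedAddCommGroup G] [NormedSpace 𝕜 G] {g : F → G} {f : E → F} {x : E} {n : ℕ}
    {σ A M T : ℝ} (hg : ContDiffAt 𝕜 n g (f x)) (hf : ContDiffAt 𝕜 n f x)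
    (hσ : σ ≤ 1) (hf1 : ‖fderiv 𝕜 f x‖ ≤ σ)
    (hfk : ∀ k, 2 ≤ k → k ≤ n → ‖iteratedFDeriv 𝕜 k f x‖ ≤ A)
    (hgn : ‖iteratedFDeriv 𝕜 n g (f x)‖ ≤ M)
    (hgk : ∀ k, 1 ≤ k → k < n → ‖iteratedFDeriv 𝕜 k g (f x)‖ ≤ T) (hT : 0 ≤ T) :
    ‖iteratedFDeriv 𝕜 n (g ∘ f) x‖ ≤
      σ ^ n * M + Fintype.card (OrderedFinpartition n) * max 1 A ^ n * T := by
  rw [iteratedFDeriv_comp hg hf le_rfl]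
  exact FormalMultilinearSeries.norm_taylorComp_le_of_contraction _ _ hσ
    ((norm_iteratedFDeriv_one f).trans_le hf1) hfk hgn hgk hT

theorem le_ciSup_ciSup_of_forall_le {α β γ : Type*} [ConditionallyCompleteLattice γ]
    {f : α → β → γ} {D : γ} (hD : ∀ a b, f a b ≤ D) (a : α) (b : β) :
    f a b ≤ ⨆ a, ⨆ b, f a b := by
  have : Nonempty β := ⟨b⟩
  exact (le_ciSup ⟨D, forall_mem_range.2 (hD a)⟩ b).trans
    (le_ciSup ⟨D, forall_mem_range.2 fun a => ciSup_le (hD a)⟩ a)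

theorem Real.le_biSup_finset_of_nonneg {ι : Type*} {s : Finset ι} {f : ι → ℝ}
    (hf : ∀ i, 0 ≤ f i) {i : ι} (hi : i ∈ s) : f i ≤ ⨆ j ∈ s, f j := by
  have hbdd : BddAbove (range fun j => ⨆ _ : j ∈ s, f j) :=
    ⟨∑ j ∈ s, f j, forall_mem_range.2 fun j =>
      Real.iSup_le (fun hj => Finset.single_le_sum (fun k _ => hf k) hj)
        (Finset.sum_nonneg fun k _ => hf k)⟩
  exact (ciSup_pos hi).ge.trans (le_ciSup hbdd i)

theorem statement8_general (q ds : ℕ) (A : ℝ) :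
    ∃ C : ℝ, ∀ (du du' : ℕ) (σ : ℝ), σ ∈ Set.Ioc (0 : ℝ) 1 →
      ∀ (Φ : EuclideanSpace ℝ (Fin du) × EuclideanSpace ℝ (Fin ds) →
          EuclideanSpace ℝ (Fin ds))
        (γ : EuclideanSpace ℝ (Fin du) → EuclideanSpace ℝ (Fin du'))
        (φ : EuclideanSpace ℝ (Fin du') × EuclideanSpace ℝ (Fin ds) → ℂ),
        (∀ u, ContDiff ℝ q fun s => Φ (u, s)) →
        (∀ u s, ‖fderiv ℝ (fun s' => Φ (u, s')) s‖ ≤ σ) →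
        (∀ k, 2 ≤ k → k ≤ q → ∀ u s,
          ‖iteratedFDeriv ℝ k (fun s' => Φ (u, s')) s‖ ≤ A) →
        (∀ u', ContDiff ℝ q fun y => φ (u', y)) →
        (∀ k ≤ q, ∃ D : ℝ, ∀ u' y,
          ‖iteratedFDeriv ℝ k (fun y' => φ (u', y')) y‖ ≤ D) →
        (⨆ u, ⨆ s, ‖iteratedFDeriv ℝ q (fun s' => φ (γ u, Φ (u, s'))) s‖) ≤
          σ ^ q * (⨆ u', ⨆ y, ‖iteratedFDeriv ℝ q (fun y' => φ (u', y')) y‖) +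
          C * ⨆ k ∈ Finset.Icc 1 (q - 1), ⨆ u', ⨆ y,
            ‖iteratedFDeriv ℝ k (fun y' => φ (u', y')) y‖ := by
  refine ⟨Fintype.card (OrderedFinpartition q) * max 1 A ^ q, ?_⟩
  rintro du du' σ ⟨hσ0, hσ1⟩ Φ γ φ hΦ hΦ1 hΦk hφ hφbd
  set S : ℕ → ℝ := fun k => ⨆ u', ⨆ y, ‖iteratedFDeriv ℝ k (fun y' => φ (u', y')) y‖
  have hS0 (k : ℕ) : 0 ≤ S k :=
    Real.iSup_nonneg fun _ => Real.iSup_nonneg fun _ => norm_nonneg _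
  have hS (k : ℕ) (hk : k ≤ q) (u' y) :
      ‖iteratedFDeriv ℝ k (fun y' => φ (u', y')) y‖ ≤ S k :=
    le_ciSup_ciSup_of_forall_le (hφbd k hk).choose_spec u' y
  have hT0 : 0 ≤ ⨆ k ∈ Finset.Icc 1 (q - 1), S k :=
    Real.iSup_nonneg fun k => Real.iSup_nonneg fun _ => hS0 k
  have hRHS0 : 0 ≤ σ ^ q * S q + Fintype.card (OrderedFinpartition q) * max 1 A ^ q *
      ⨆ k ∈ Finset.Icc 1 (q - 1), S k := by
    have := hS0 q
    positivity
  refine Real.iSup_le (fun u => Real.iSup_le (fun s => ?_) hRHS0) hRHS0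
  exact norm_iteratedFDeriv_comp_le_of_contraction (g := fun y => φ (γ u, y))
    (f := fun s' => Φ (u, s')) (hφ (γ u)).contDiffAt (hΦ u).contDiffAt hσ1
    (hΦ1 u s) (fun k h2 hk => hΦk k h2 hk u s) (hS q le_rfl _ _)
    (fun k h1 hk => (hS k hk.le _ _).trans
      (Real.le_biSup_finset_of_nonneg hS0 (Finset.mem_Icc.2 ⟨h1, by omega⟩))) hT0

/-- contraction estimate for the top-order derivative, in the contracted
direction, of the composition of a test function with a triangular map
`Ψ(u,s) = (γ(u), Φ(u,s))` whose second component contracts the `s`-direction with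
factor `σ`. The constant `C` depends only on `q`, `dₛ` and `A`. -/
theorem statement8 (q ds : ℕ) (hq : 1 ≤ q) (hds : 0 < ds) (A : ℝ) (hA : 0 ≤ A) :
    ∃ C : ℝ, ∀ (du du' : ℕ) (σ : ℝ), σ ∈ Set.Ioc (0 : ℝ) 1 →
      ∀ (Φ : EuclideanSpace ℝ (Fin du) × EuclideanSpace ℝ (Fin ds) →
          EuclideanSpace ℝ (Fin ds))
        (γ : EuclideanSpace ℝ (Fin du) → EuclideanSpace ℝ (Fin du'))
        (φ : EuclideanSpace ℝ (Fin du') × EuclideanSpace ℝ (Fin ds) → ℂ),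
        (∀ u, ContDiff ℝ q fun s => Φ (u, s)) →
        (∀ u s, ‖fderiv ℝ (fun s' => Φ (u, s')) s‖ ≤ σ) →
        (∀ k, 2 ≤ k → k ≤ q → ∀ u s,
          ‖iteratedFDeriv ℝ k (fun s' => Φ (u, s')) s‖ ≤ A) →
        (∀ u', ContDiff ℝ q fun y => φ (u', y)) →
        (∀ k ≤ q, ∃ D : ℝ, ∀ u' y,
          ‖iteratedFDeriv ℝ k (fun y' => φ (u', y')) y‖ ≤ D) →
        (⨆ u, ⨆ s, ‖iteratedFDeriv ℝ q (fun s' => φ (γ u, Φ (u, s'))) s‖) ≤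
          σ ^ q * (⨆ u', ⨆ y, ‖iteratedFDeriv ℝ q (fun y' => φ (u', y')) y‖) +
          C * ⨆ k ∈ Finset.Icc 1 (q - 1), ⨆ u', ⨆ y,
            ‖iteratedFDeriv ℝ k (fun y' => φ (u', y')) y‖ :=
  statement8_general q ds A
end

section
/- Let U ⊆ ℝ^{d_u}×ℝ^{d_s} be open, F : U → ℝ^{d_u} a C² map such that 𝔽(x,y) := (F(x,y), y) is a C² diffeomorphism of U onto an open set V ⊆ ℝ^{d_u}×ℝ^{d_s}, with ∂_x F(x,y) invertible everywhere. Let w : V → ℝ^{d_s} be C¹ and define the vector field φ^s : V → ℝ^{d_u}×ℝ^{d_s} by φ^s(z) := ( ∂_y F(𝔽^{-1}(z)) · w(z), w(z) ). Then for all (x,y) ∈ U: (div φ^s)(𝔽(x,y)) = Σ_{i=1}^{d_s} ∂_{y_i}[ w_i ∘ 𝔽 ](x,y) + Σ_{i=1}^{d_s} H^F_i(x,y) · (w_i ∘ 𝔽)(x,y), where H^F_i(x,y) := tr( (∂_x F(x,y))^{-1} · ∂_x(∂_{y_i} F)(x,y) ) and div denotes the Euclidean divergence on ℝ^{d_u}×ℝ^{d_s}.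 -/
/-!
Write `z = 𝔽(x,y)` and `w = w(z)`. Differentiating `𝔽 ∘ 𝔽⁻¹ = id` shows that `D(𝔽⁻¹)(z)` maps
`(v, 0)` to `((∂ₓF)⁻¹ v, 0)`, and the chain rule gives
`Dφˢ(z) = (D²F(x,y) (D(𝔽⁻¹)(z) ·) (0, w) + ∂_yF ∘ Dw(z), Dw(z))`.
Its trace, the divergence, is therefore
`∑ᵢ wᵢ tr(∂ₓ∂_{yᵢ}F ∘ (∂ₓF)⁻¹) + tr(∂_yF ∘ ∂ₓw) + tr(∂_y w)`,
and `tr(∂_yF ∘ ∂ₓw) = tr(∂ₓw ∘ ∂_yF)` turns the last two terms into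
`∑ᵢ ∂_{yᵢ}(wᵢ ∘ 𝔽) = tr(∂ₓw ∘ ∂_yF + ∂_y w)`.
-/

open scoped BigOperators

/-- The partial Jacobian matrix `∂ₓF` in the first group of variables. -/
noncomputable def pJx {du ds : ℕ}
    (F : EuclideanSpace ℝ (Fin du) × EuclideanSpace ℝ (Fin ds) → EuclideanSpace ℝ (Fin du))
    (p : EuclideanSpace ℝ (Fin du) × EuclideanSpace ℝ (Fin ds)) :
    Matrix (Fin du) (Fin du) ℝ :=
  Matrix.of fun a b =>
    fderiv ℝ (fun x => F (x, p.2) a) p.1 (EuclideanSpace.single b (1 : ℝ))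

/-- The matrix `∂ₓ(∂_{y_i} F)`. -/
noncomputable def pJxy {du ds : ℕ}
    (F : EuclideanSpace ℝ (Fin du) × EuclideanSpace ℝ (Fin ds) → EuclideanSpace ℝ (Fin du))
    (i : Fin ds)
    (p : EuclideanSpace ℝ (Fin du) × EuclideanSpace ℝ (Fin ds)) :
    Matrix (Fin du) (Fin du) ℝ :=
  Matrix.of fun a b =>
    fderiv ℝ (fun x =>
      fderiv ℝ (fun y => F (x, y) a) p.2 (EuclideanSpace.single i (1 : ℝ))) p.1
      (EuclideanSpace.single b (1 : ℝ))

/-- Euclidean divergence of a vector field on `ℝ^{dᵤ} × ℝ^{dₛ}`. -/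
noncomputable def divP {du ds : ℕ}
    (f : EuclideanSpace ℝ (Fin du) × EuclideanSpace ℝ (Fin ds) →
      EuclideanSpace ℝ (Fin du) × EuclideanSpace ℝ (Fin ds))
    (z : EuclideanSpace ℝ (Fin du) × EuclideanSpace ℝ (Fin ds)) : ℝ :=
  (∑ a : Fin du, fderiv ℝ (fun z' => (f z').1 a) z (EuclideanSpace.single a (1 : ℝ), 0)) +
    ∑ i : Fin ds, fderiv ℝ (fun z' => (f z').2 i) z (0, EuclideanSpace.single i (1 : ℝ))

open Filter Topology ContinuousLinearMap

local notation:max "ℝ^" ι:max => EuclideanSpace ℝ ι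

local notation "toMatrixₑ" =>
  LinearMap.toMatrix (OrthonormalBasis.toBasis (EuclideanSpace.basisFun _ ℝ))
    (OrthonormalBasis.toBasis (EuclideanSpace.basisFun _ ℝ))

theorem Matrix.trace_inv_toMatrix_mul {R V ι : Type*} [CommRing R] [AddCommGroup V] [Module R V]
    [Fintype ι] [DecidableEq ι] (b : Module.Basis ι R V) {A C : V →ₗ[R] V}
    (hAC : A ∘ₗ C = LinearMap.id) (N : V →ₗ[R] V) :
    ((LinearMap.toMatrix b b A)⁻¹ * LinearMap.toMatrix b b N).trace =
      LinearMap.trace R V (N ∘ₗ C) := by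
  have hinv : (LinearMap.toMatrix b b A)⁻¹ = LinearMap.toMatrix b b C :=
    Matrix.inv_eq_right_inv (by rw [← LinearMap.toMatrix_comp, hAC, LinearMap.toMatrix_id])
  rw [hinv, Matrix.trace_mul_comm, ← LinearMap.toMatrix_comp, ← LinearMap.trace_eq_matrix_trace]

namespace EuclideanSpace

variable {ι κ : Type*} [Fintype ι] [Fintype κ]

theorem toMatrix_basisFun_apply [DecidableEq ι] (f : ℝ^ι →ₗ[ℝ] ℝ^κ) (a : κ) (b : ι) :
    toMatrixₑ f a b = f (single b 1) a := by
  simp [LinearMap.toMatrix_apply]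

theorem trace_eq_sum_apply_single [DecidableEq ι] (f : ℝ^ι →ₗ[ℝ] ℝ^ι) :
    LinearMap.trace ℝ _ f = ∑ a, f (single a 1) a := by
  simp [LinearMap.trace_eq_matrix_trace ℝ (basisFun ι ℝ).toBasis, Matrix.trace,
    toMatrix_basisFun_apply]

theorem sum_apply_single_comp_comm [DecidableEq ι] [DecidableEq κ] (f : ℝ^ι →ₗ[ℝ] ℝ^κ)
    (g : ℝ^κ →ₗ[ℝ] ℝ^ι) :
    ∑ a, g (f (single a 1)) a = ∑ i, f (g (single i 1)) i := by
  simpa only [trace_eq_sum_apply_single, LinearMap.comp_apply] using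
    LinearMap.trace_comp_comm' f g

theorem apply_eq_sum_smul_single [DecidableEq κ] {R : Type*} [AddCommGroup R] [Module ℝ R]
    (ℓ : ℝ^κ →ₗ[ℝ] R) (u : ℝ^κ) :
    ℓ u = ∑ i, u i • ℓ (single i 1) := by
  conv_lhs => rw [← (basisFun κ ℝ).sum_repr u]
  simp

theorem fderiv_apply {X : Type*} [NormedAddCommGroup X] [NormedSpace ℝ X] {f : X → ℝ^ι} {x : X}
    (hf : DifferentiableAt ℝ f x) (a : ι) (v : X) :
    fderiv ℝ (fun z => f z a) x v = fderiv ℝ f x v a := by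
  have h : HasFDerivAt (fun z => f z a) ((PiLp.proj 2 _ a).comp (fderiv ℝ f x)) x :=
    (PiLp.hasFDerivAt_apply (𝕜 := ℝ) 2 (f x) a).comp x hf.hasFDerivAt
  rw [h.fderiv]
  rfl

end EuclideanSpace

section PartialDerivatives

variable {𝕜 : Type*} [NontriviallyNormedField 𝕜] {E G H X : Type*}
  [NormedAddCommGroup E] [NormedSpace 𝕜 E] [NormedAddCommGroup G] [NormedSpace 𝕜 G]
  [NormedAddCommGroup H] [NormedSpace 𝕜 H] [NormedAddCommGroup X] [NormedSpace 𝕜 X]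

theorem fderiv_partial_fst {F : E × G → H} {p : E × G} (hF : DifferentiableAt 𝕜 F p) :
    fderiv 𝕜 (fun x => F (x, p.2)) p.1 = fderiv 𝕜 F p ∘L inl 𝕜 E G :=
  (hF.hasFDerivAt.comp p.1 (hasFDerivAt_prodMk_left p.1 p.2)).fderiv

theorem fderiv_partial_snd {F : E × G → H} {p : E × G} (hF : DifferentiableAt 𝕜 F p) :
    fderiv 𝕜 (fun y => F (p.1, y)) p.2 = fderiv 𝕜 F p ∘L inr 𝕜 E G :=
  (hF.hasFDerivAt.comp p.2 (hasFDerivAt_prodMk_right p.1 p.2)).fderiv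

theorem comp_eq_id_of_eventually_leftInverse {Y : Type*} [NormedAddCommGroup Y]
    [NormedSpace 𝕜 Y] {f : X → Y} {g : Y → X} {f' : X →L[𝕜] Y} {g' : Y →L[𝕜] X} {x : X}
    (hg : HasFDerivAt g g' (f x)) (hf : HasFDerivAt f f' x) (hgf : ∀ᶠ z in 𝓝 x, g (f z) = z) :
    g' ∘L f' = ContinuousLinearMap.id 𝕜 X :=
  (hg.comp x hf).unique ((hasFDerivAt_id x).congr_of_eventuallyEq hgf)

theorem hasFDerivAt_fderiv_partial_snd_apply {F : E × G → H} {Finv : X → E × G} {w : X → G}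
    {z : X} {S : E × G →L[𝕜] E × G →L[𝕜] H} {T : X →L[𝕜] E × G} {Dw : X →L[𝕜] G}
    (hF : ∀ᶠ z' in 𝓝 z, DifferentiableAt 𝕜 F (Finv z'))
    (hS : HasFDerivAt (fderiv 𝕜 F) S (Finv z)) (hT : HasFDerivAt Finv T z)
    (hw : HasFDerivAt w Dw z) :
    HasFDerivAt (fun z' => fderiv 𝕜 (fun y => F ((Finv z').1, y)) (Finv z').2 (w z'))
      (fderiv 𝕜 F (Finv z) ∘L inr 𝕜 E G ∘L Dw + (S ∘L T).flip (0, w z)) z := by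
  have hev : (fun z' => fderiv 𝕜 (fun y => F ((Finv z').1, y)) (Finv z').2 (w z')) =ᶠ[𝓝 z]
      fun z' => fderiv 𝕜 F (Finv z') (inr 𝕜 E G (w z')) :=
    hF.mono fun z' h => by simp only [fderiv_partial_snd h]; rfl
  exact ((hS.comp z hT).clm_apply ((inr 𝕜 E G).hasFDerivAt.comp z hw)).congr_of_eventuallyEq hev

theorem hasFDerivAt_comp_graph {K : Type*} [NormedAddCommGroup K] [NormedSpace 𝕜 K]
    {F : E × G → H} {w : H × G → K} {p : E × G} {DF : E × G →L[𝕜] H} {Dw : H × G →L[𝕜] K}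
    (hw : HasFDerivAt w Dw (F p, p.2)) (hF : HasFDerivAt F DF p) :
    HasFDerivAt (fun y => w (F (p.1, y), y)) (Dw ∘L (DF ∘L inr 𝕜 E G).prod (.id 𝕜 G)) p.2 :=
  hw.comp (f := fun y => (F (p.1, y), y)) p.2
    ((hF.comp p.2 (hasFDerivAt_prodMk_right p.1 p.2)).prodMk (hasFDerivAt_id _))

end PartialDerivatives

section TraceIdentities

variable {ι κ : Type*} [Fintype ι] [DecidableEq ι] [Fintype κ] [DecidableEq κ]

theorem sum_apply_single_eq_sum_trace_inv_mul {DF : ℝ^ι × ℝ^κ →L[ℝ] ℝ^ι}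
    {S : ℝ^ι × ℝ^κ →L[ℝ] ℝ^ι × ℝ^κ →L[ℝ] ℝ^ι} {T : ℝ^ι × ℝ^κ →L[ℝ] ℝ^ι × ℝ^κ}
    (hT : DF.prod (snd ℝ _ _) ∘L T = ContinuousLinearMap.id ℝ _) (u : ℝ^κ) :
    ∑ a, S (T (EuclideanSpace.single a 1, 0)) (0, u) a =
      ∑ i, Matrix.trace ((toMatrixₑ (DF ∘L inl ℝ _ _ : ℝ^ι →ₗ[ℝ] ℝ^ι))⁻¹ *
        toMatrixₑ ((S ∘L inl ℝ _ _).flip (0, EuclideanSpace.single i 1) : ℝ^ι →ₗ[ℝ] ℝ^ι)) *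
        u i := by
  set C := fst ℝ _ _ ∘L T ∘L inl ℝ _ ℝ^κ
  have hTC : ∀ x, T (x, 0) = (C x, 0) ∧ DF (C x, 0) = x := fun x => by
    have h := congr($hT (x, 0))
    simp only [comp_apply, prod_apply, coe_snd', coe_id', id_eq, Prod.mk.injEq] at h
    have hT2 : T (x, 0) = (C x, 0) := Prod.ext rfl h.2
    exact ⟨hT2, hT2 ▸ h.1⟩
  have hAC : ((DF ∘L inl ℝ _ _ : ℝ^ι →L[ℝ] ℝ^ι) : ℝ^ι →ₗ[ℝ] ℝ^ι) ∘ₗ (C : ℝ^ι →ₗ[ℝ] ℝ^ι) =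
      LinearMap.id :=
    LinearMap.ext fun x => (hTC x).2
  simp only [Matrix.trace_inv_toMatrix_mul _ hAC, EuclideanSpace.trace_eq_sum_apply_single]
  calc ∑ a, S (T (EuclideanSpace.single a 1, 0)) (0, u) a
      = ∑ a, ∑ i, u i *
          S (C (EuclideanSpace.single a 1), 0) (0, EuclideanSpace.single i 1) a := by
        refine Finset.sum_congr rfl fun a _ => ?_
        rw [(hTC _).1]
        exact EuclideanSpace.apply_eq_sum_smul_single
          ((EuclideanSpace.proj a ∘L S (C (EuclideanSpace.single a 1), 0) ∘L inr ℝ _ _ :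
            ℝ^κ →L[ℝ] ℝ) : ℝ^κ →ₗ[ℝ] ℝ) u
    _ = _ := by
        rw [Finset.sum_comm]
        simp [Finset.mul_sum, mul_comm]

theorem sum_apply_single_comp_prod_id (B : ℝ^κ →L[ℝ] ℝ^ι) (D : ℝ^ι × ℝ^κ →L[ℝ] ℝ^κ) :
    ∑ a, B (D (EuclideanSpace.single a 1, 0)) a + ∑ i, D (0, EuclideanSpace.single i 1) i =
      ∑ i, D (B (EuclideanSpace.single i 1), EuclideanSpace.single i 1) i := by
  have hD : ∀ i, D (B (EuclideanSpace.single i 1), EuclideanSpace.single i 1) i =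
      D (B (EuclideanSpace.single i 1), 0) i + D (0, EuclideanSpace.single i 1) i := fun i => by
    rw [← PiLp.add_apply, ← map_add, Prod.mk_add_mk, add_zero, zero_add]
  simp only [hD, Finset.sum_add_distrib]
  congr 1
  exact EuclideanSpace.sum_apply_single_comp_comm (D ∘L inl ℝ _ _ : ℝ^ι →ₗ[ℝ] ℝ^κ)
    (B : ℝ^κ →ₗ[ℝ] ℝ^ι)

theorem sum_diag_stableField_deriv {DF : ℝ^ι × ℝ^κ →L[ℝ] ℝ^ι}
    {S : ℝ^ι × ℝ^κ →L[ℝ] ℝ^ι × ℝ^κ →L[ℝ] ℝ^ι} {T : ℝ^ι × ℝ^κ →L[ℝ] ℝ^ι × ℝ^κ}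
    (hT : DF.prod (snd ℝ _ _) ∘L T = ContinuousLinearMap.id ℝ _) (Dw : ℝ^ι × ℝ^κ →L[ℝ] ℝ^κ)
    (u : ℝ^κ) :
    ∑ a, (DF (0, Dw (EuclideanSpace.single a 1, 0)) +
        S (T (EuclideanSpace.single a 1, 0)) (0, u)) a +
      ∑ i, Dw (0, EuclideanSpace.single i 1) i =
    ∑ i, Dw (DF (0, EuclideanSpace.single i 1), EuclideanSpace.single i 1) i +
      ∑ i, Matrix.trace ((toMatrixₑ (DF ∘L inl ℝ _ _ : ℝ^ι →ₗ[ℝ] ℝ^ι))⁻¹ *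
        toMatrixₑ ((S ∘L inl ℝ _ _).flip (0, EuclideanSpace.single i 1) : ℝ^ι →ₗ[ℝ] ℝ^ι)) *
        u i := by
  have hmixed := sum_apply_single_comp_prod_id (DF ∘L inr ℝ _ _) Dw
  simp only [comp_apply, inr_apply] at hmixed
  rw [← sum_apply_single_eq_sum_trace_inv_mul hT, ← hmixed]
  simp only [PiLp.add_apply, Finset.sum_add_distrib]
  ring

end TraceIdentities

section Foliation

variable {du ds : ℕ}

theorem pJx_eq_toMatrix {F : ℝ^(Fin du) × ℝ^(Fin ds) → ℝ^(Fin du)}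
    {p : ℝ^(Fin du) × ℝ^(Fin ds)} (hF : DifferentiableAt ℝ F p) :
    pJx F p = toMatrixₑ (fderiv ℝ F p ∘L inl ℝ _ _ : ℝ^(Fin du) →L[ℝ] ℝ^(Fin du)) := by
  ext a b
  have hslice : DifferentiableAt ℝ (fun x => F (x, p.2)) p.1 :=
    (hF.hasFDerivAt.comp p.1 (hasFDerivAt_prodMk_left p.1 p.2)).differentiableAt
  rw [EuclideanSpace.toMatrix_basisFun_apply, pJx, Matrix.of_apply,
    EuclideanSpace.fderiv_apply hslice, fderiv_partial_fst hF]
  rfl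

theorem pJxy_eq_toMatrix {F : ℝ^(Fin du) × ℝ^(Fin ds) → ℝ^(Fin du)}
    {p : ℝ^(Fin du) × ℝ^(Fin ds)}
    {S : ℝ^(Fin du) × ℝ^(Fin ds) →L[ℝ] ℝ^(Fin du) × ℝ^(Fin ds) →L[ℝ] ℝ^(Fin du)}
    (hF : ∀ᶠ q in 𝓝 p, DifferentiableAt ℝ F q) (hS : HasFDerivAt (fderiv ℝ F) S p)
    (i : Fin ds) :
    pJxy F i p = toMatrixₑ ((S ∘L inl ℝ _ _).flip (0, EuclideanSpace.single i 1)) := by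
  ext a b
  have hFx : ∀ᶠ x in 𝓝 p.1, DifferentiableAt ℝ F (x, p.2) :=
    (continuous_id.prodMk continuous_const).continuousAt.eventually hF
  have hev : (fun x => fderiv ℝ (fun y => F (x, y) a) p.2 (EuclideanSpace.single i 1))
      =ᶠ[𝓝 p.1] fun x => fderiv ℝ F (x, p.2) (0, EuclideanSpace.single i 1) a := by
    filter_upwards [hFx] with x hx
    have hslice : DifferentiableAt ℝ (fun y => F (x, y)) p.2 :=
      (hx.hasFDerivAt.comp p.2 (hasFDerivAt_prodMk_right x p.2)).differentiableAt
    rw [EuclideanSpace.fderiv_apply hslice, fderiv_partial_snd hx]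
    rfl
  have hder : HasFDerivAt (fun x => fderiv ℝ F (x, p.2) (0, EuclideanSpace.single i 1))
      ((S ∘L inl ℝ _ _).flip (0, EuclideanSpace.single i 1)) p.1 := by
    have hSx : HasFDerivAt (fun x => fderiv ℝ F (x, p.2)) (S ∘L inl ℝ _ _) p.1 :=
      hS.comp p.1 (hasFDerivAt_prodMk_left p.1 p.2)
    simpa using hSx.clm_apply (hasFDerivAt_const _ _)
  rw [EuclideanSpace.toMatrix_basisFun_apply, pJxy, Matrix.of_apply, hev.fderiv_eq,
    EuclideanSpace.fderiv_apply hder.differentiableAt, hder.fderiv]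
  rfl

theorem divP_eq_of_hasFDerivAt {f : ℝ^(Fin du) × ℝ^(Fin ds) → ℝ^(Fin du) × ℝ^(Fin ds)}
    {f' : ℝ^(Fin du) × ℝ^(Fin ds) →L[ℝ] ℝ^(Fin du) × ℝ^(Fin ds)}
    {z : ℝ^(Fin du) × ℝ^(Fin ds)} (hf : HasFDerivAt f f' z) :
    divP f z = ∑ a, (f' (EuclideanSpace.single a 1, 0)).1 a +
      ∑ i, (f' (0, EuclideanSpace.single i 1)).2 i := by
  simp only [divP, EuclideanSpace.fderiv_apply hf.fst.differentiableAt,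
    EuclideanSpace.fderiv_apply hf.snd.differentiableAt, hf.fst.fderiv, hf.snd.fderiv]
  rfl

end Foliation

theorem statement12_general {du ds : ℕ}
    (U V : Set (EuclideanSpace ℝ (Fin du) × EuclideanSpace ℝ (Fin ds)))
    (hU : IsOpen U) (hV : IsOpen V)
    (F : EuclideanSpace ℝ (Fin du) × EuclideanSpace ℝ (Fin ds) → EuclideanSpace ℝ (Fin du))
    (hF : ContDiffOn ℝ 2 F U)
    (hbij : Set.BijOn (fun p => (F p, p.2)) U V)
    (Finv : EuclideanSpace ℝ (Fin du) × EuclideanSpace ℝ (Fin ds) →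
      EuclideanSpace ℝ (Fin du) × EuclideanSpace ℝ (Fin ds))
    (hFinvMaps : Set.MapsTo Finv V U)
    (hFinvL : ∀ p ∈ U, Finv (F p, p.2) = p)
    (hFinvR : ∀ z ∈ V, (F (Finv z), (Finv z).2) = z)
    (hFinvsm : ContDiffOn ℝ 2 Finv V)
    (w : EuclideanSpace ℝ (Fin du) × EuclideanSpace ℝ (Fin ds) → EuclideanSpace ℝ (Fin ds))
    (hw : ContDiffOn ℝ 1 w V) :
    ∀ p ∈ U,
      divP (fun z => (fderiv ℝ (fun y => F ((Finv z).1, y)) (Finv z).2 (w z), w z))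
          (F p, p.2) =
        (∑ i : Fin ds,
          fderiv ℝ (fun y => w (F (p.1, y), y) i) p.2 (EuclideanSpace.single i (1 : ℝ))) +
        ∑ i : Fin ds,
          Matrix.trace ((pJx F p)⁻¹ * pJxy F i p) * w (F p, p.2) i := by
  intro p hp
  have hz : (F p, p.2) ∈ V := hbij.mapsTo hp
  have hFinv_z : Finv (F p, p.2) = p := hFinvL p hp
  have hFU : ∀ q ∈ U, DifferentiableAt ℝ F q := fun q hq =>
    (hF.differentiableOn (by norm_num)).differentiableAt (hU.mem_nhds hq)
  have hDF : HasFDerivAt F (fderiv ℝ F p) p := (hFU p hp).hasFDerivAt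
  have hS : HasFDerivAt (fderiv ℝ F) (fderiv ℝ (fderiv ℝ F) p) p :=
    (((hF.contDiffAt (hU.mem_nhds hp)).fderiv_right (m := 1) (by norm_num)).differentiableAt
      (by norm_num)).hasFDerivAt
  have hT : HasFDerivAt Finv (fderiv ℝ Finv (F p, p.2)) (F p, p.2) :=
    ((hFinvsm.differentiableOn (by norm_num)).differentiableAt (hV.mem_nhds hz)).hasFDerivAt
  have hDw : HasFDerivAt w (fderiv ℝ w (F p, p.2)) (F p, p.2) :=
    ((hw.differentiableOn one_ne_zero).differentiableAt (hV.mem_nhds hz)).hasFDerivAt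
  have hinv : (fderiv ℝ F p).prod (snd ℝ _ _) ∘L fderiv ℝ Finv (F p, p.2) = .id ℝ _ :=
    comp_eq_id_of_eventually_leftInverse (g := fun q => (F q, q.2))
      (by rw [hFinv_z]; exact hDF.prodMk hasFDerivAt_snd) hT
      (eventually_of_mem (hV.mem_nhds hz) hFinvR)
  have hφ := (hasFDerivAt_fderiv_partial_snd_apply
    (eventually_of_mem (hV.mem_nhds hz) fun z hz => hFU _ (hFinvMaps hz))
    (hFinv_z ▸ hS) hT hDw).prodMk hDw
  rw [hFinv_z] at hφ
  have hwgraph := hasFDerivAt_comp_graph hDw hDF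
  rw [divP_eq_of_hasFDerivAt hφ, pJx_eq_toMatrix hDF.differentiableAt]
  simp only [pJxy_eq_toMatrix (eventually_of_mem (hU.mem_nhds hp) hFU) hS,
    EuclideanSpace.fderiv_apply (f := fun y => w (F (p.1, y), y)) hwgraph.differentiableAt,
    hwgraph.fderiv]
  simpa using sum_diag_stableField_deriv hinv (fderiv ℝ w (F p, p.2)) (w (F p, p.2))

/-- divergence of the stable vector field
`φˢ(z) = (∂_yF(𝔽⁻¹ z) · w(z), w(z))` in the foliation coordinates `𝔽(x,y) = (F(x,y),y)`:
`(div φˢ)(𝔽(x,y)) = ∑ᵢ ∂_{yᵢ}[wᵢ∘𝔽](x,y) + ∑ᵢ H^F_i(x,y) (wᵢ∘𝔽)(x,y)`, where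
`H^F_i = tr((∂ₓF)⁻¹ ∂ₓ∂_{yᵢ}F)`. -/
theorem statement12 {du ds : ℕ} (hdu : 0 < du) (hds : 0 < ds)
    (U V : Set (EuclideanSpace ℝ (Fin du) × EuclideanSpace ℝ (Fin ds)))
    (hU : IsOpen U) (hV : IsOpen V)
    (F : EuclideanSpace ℝ (Fin du) × EuclideanSpace ℝ (Fin ds) → EuclideanSpace ℝ (Fin du))
    (hF : ContDiffOn ℝ 2 F U)
    (hbij : Set.BijOn (fun p => (F p, p.2)) U V)
    (Finv : EuclideanSpace ℝ (Fin du) × EuclideanSpace ℝ (Fin ds) →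
      EuclideanSpace ℝ (Fin du) × EuclideanSpace ℝ (Fin ds))
    (hFinvMaps : Set.MapsTo Finv V U)
    (hFinvL : ∀ p ∈ U, Finv (F p, p.2) = p)
    (hFinvR : ∀ z ∈ V, (F (Finv z), (Finv z).2) = z)
    (hFinvsm : ContDiffOn ℝ 2 Finv V)
    (hA : ∀ p ∈ U, IsUnit (pJx F p))
    (w : EuclideanSpace ℝ (Fin du) × EuclideanSpace ℝ (Fin ds) → EuclideanSpace ℝ (Fin ds))
    (hw : ContDiffOn ℝ 1 w V) :
    ∀ p ∈ U,
      divP (fun z => (fderiv ℝ (fun y => F ((Finv z).1, y)) (Finv z).2 (w z), w z))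
          (F p, p.2) =
        (∑ i : Fin ds,
          fderiv ℝ (fun y => w (F (p.1, y), y) i) p.2 (EuclideanSpace.single i (1 : ℝ))) +
        ∑ i : Fin ds,
          Matrix.trace ((pJx F p)⁻¹ * pJxy F i p) * w (F p, p.2) i :=
  statement12_general U V hU hV F hF hbij Finv hFinvMaps hFinvL hFinvR hFinvsm w hw
end

section
/- Let X be a complex Banach space and L a bounded linear operator on X that is power-bounded, i.e. sup_{n≥0} ‖L^n‖ < ∞. Let λ ∈ ℂ with |λ| = 1, and let Π be a bounded projection on X commuting with L such that ((L − λI)Π)^m = 0 for some integer m ≥ 1. Then (L − λI)Π = 0; that is, a power-bounded operator admits no nontrivial Jordan block at an eigenvalue of modulus one. -/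
/-! If `(L - λ)² A = 0` and `N = (L - λ) A`, then `λ Lⁿ A = λⁿ⁺¹ A + n λⁿ N`, so for `‖λ‖ = 1`
boundedness of `n ↦ Lⁿ A` forces `N = 0`. Applied to `A = (L - λ)ᵏ Π`, whose orbit is still
bounded because `L` commutes with `L - λ`, this lowers the nilpotency order of `(L - λ) Π` one
step at a time down to `1`. -/

lemma eq_zero_of_forall_nat_mul_norm_le {E : Type*} [NormedAddCommGroup E] {x : E} {K : ℝ}
    (h : ∀ n : ℕ, n * ‖x‖ ≤ K) : x = 0 := by
  by_contra hx
  have hpos : 0 < ‖x‖ := norm_pos_iff.mpr hx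
  obtain ⟨n, hn⟩ := exists_nat_gt (K / ‖x‖)
  have := h n
  rw [div_lt_iff₀ hpos] at hn
  linarith

section PowerBounded

-- Not a general normed field: over `ℚ_[p]` the Jordan block `!![1, 1; 0, 1]` is power-bounded.
variable {𝕜 R : Type*} [RCLike 𝕜] [NormedRing R] [NormedAlgebra 𝕜 R] {L : R} {c : 𝕜}

lemma smul_pow_mul_of_sub_sq_mul_eq_zero {A : R} (h : (L - c • 1) ^ 2 * A = 0) (n : ℕ) :
    c • (L ^ n * A) = c ^ (n + 1) • A + ((n : 𝕜) * c ^ n) • ((L - c • 1) * A) := by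
  set N := (L - c • 1) * A
  have hLA : L * A = c • A + N := by
    simp only [N, sub_mul, smul_mul_assoc, one_mul]; abel
  have hLN : L * N = c • N := by
    rw [← sub_eq_zero, ← smul_one_mul c N, ← sub_mul]
    simp only [N, ← mul_assoc, ← sq, h]
  induction n with
  | zero => simp
  | succ n ih =>
    rw [pow_succ', mul_assoc, ← mul_smul_comm, ih, mul_add, mul_smul_comm, mul_smul_comm, hLA, hLN]
    push_cast
    module

lemma sub_smul_one_mul_eq_zero_of_sq_mul_eq_zero {A : R} {D : ℝ} (hc : ‖c‖ = 1)
    (hbdd : ∀ n : ℕ, ‖L ^ n * A‖ ≤ D) (h : (L - c • 1) ^ 2 * A = 0) :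
    (L - c • 1) * A = 0 := by
  refine eq_zero_of_forall_nat_mul_norm_le (K := D + ‖A‖) fun n => ?_
  have hN := smul_pow_mul_of_sub_sq_mul_eq_zero h n
  calc (n : ℝ) * ‖(L - c • 1) * A‖ = ‖((n : 𝕜) * c ^ n) • ((L - c • 1) * A)‖ := by
        rw [norm_smul ((n : 𝕜) * c ^ n), norm_mul (n : 𝕜), norm_pow, hc, one_pow, mul_one,
          RCLike.norm_natCast]
    _ = ‖c • (L ^ n * A) - c ^ (n + 1) • A‖ := by rw [hN, add_sub_cancel_left]
    _ ≤ ‖c • (L ^ n * A)‖ + ‖c ^ (n + 1) • A‖ := norm_sub_le _ _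
    _ ≤ D + ‖A‖ := by
        rw [norm_smul c, norm_smul (c ^ (n + 1)), norm_pow, hc, one_pow, one_mul, one_mul]
        linarith [hbdd n]

lemma sub_smul_one_mul_eq_zero_of_pow_mul_eq_zero {B : R} {D : ℝ} (hc : ‖c‖ = 1)
    (hbdd : ∀ n : ℕ, ‖L ^ n * B‖ ≤ D) {k : ℕ} (h : (L - c • 1) ^ (k + 1) * B = 0) :
    (L - c • 1) * B = 0 := by
  induction k with
  | zero => simpa using h
  | succ k ih =>
    refine ih ?_
    have hcomm : Commute L (L - c • 1) :=
      (Commute.refl L).sub_right ((Commute.one_right L).smul_right c)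
    have hbk : ∀ n : ℕ, ‖L ^ n * ((L - c • 1) ^ k * B)‖ ≤ ‖(L - c • 1) ^ k‖ * D := fun n => by
      rw [← mul_assoc, (hcomm.pow_pow n k).eq, mul_assoc]
      exact (norm_mul_le _ _).trans (mul_le_mul_of_nonneg_left (hbdd n) (norm_nonneg _))
    have hsq : (L - c • 1) ^ 2 * ((L - c • 1) ^ k * B) = 0 := by
      rwa [← mul_assoc, ← pow_add, add_comm]
    have hstep := sub_smul_one_mul_eq_zero_of_sq_mul_eq_zero hc hbk hsq
    rwa [← mul_assoc, ← pow_succ'] at hstep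

end PowerBounded

/-- a power-bounded operator has no nontrivial Jordan block at an eigenvalue
of modulus one: if `Π` is a projection commuting with `L` and `((L − λ)Π)^m = 0` for some
`m ≥ 1` with `|λ| = 1`, then `(L − λ)Π = 0`. -/
theorem statement15 {X : Type*} [NormedAddCommGroup X] [NormedSpace ℂ X]
    (L P : X →L[ℂ] X)
    (hpb : ∃ C : ℝ, ∀ n : ℕ, ‖L ^ n‖ ≤ C)
    (lam : ℂ) (hlam : ‖lam‖ = 1)
    (hP : P.comp P = P)
    (hcomm : L.comp P = P.comp L)
    (m : ℕ) (hm : 1 ≤ m)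
    (hnil : ((L - lam • ContinuousLinearMap.id ℂ X).comp P) ^ m = 0) :
    (L - lam • ContinuousLinearMap.id ℂ X).comp P = 0 := by
  obtain ⟨C, hC⟩ := hpb
  obtain ⟨k, rfl⟩ := Nat.exists_eq_add_of_le' hm
  have hTP : Commute (L - lam • 1) P :=
    Commute.sub_left hcomm ((Commute.one_left P).smul_left lam)
  have hnil' : (L - lam • 1) ^ (k + 1) * P = 0 := by
    rw [← IsIdempotentElem.pow_succ_eq k hP, ← hTP.mul_pow]
    exact hnil
  exact sub_smul_one_mul_eq_zero_of_pow_mul_eq_zero hlam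
    (fun n => (norm_mul_le _ _).trans (mul_le_mul_of_nonneg_right (hC n) (norm_nonneg P))) hnil'
end

section
/- Let (X, 𝔉, μ) be a probability space, T : X → X a measurable map, h : X → ℝ a bounded measurable function, and g ∈ L²(μ). Suppose there is C > 0 such that for all n ≥ 1: ∫_X | (1/n) Σ_{k=0}^{n−1} h∘T^k − g |² dμ ≤ C/n. Then (1/n) Σ_{k=0}^{n−1} h∘T^k converges to g μ-almost everywhere as n → ∞. -/
open MeasureTheory

/-- Deterministic estimate: if `|u k| ≤ M` for all `k`, and `m^2 ≤ n < (m+1)^2` with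
`1 ≤ m`, then the Cesàro averages at times `n` and `m^2` differ by at most `4*M/m`. -/
lemma avg_close (u : ℕ → ℝ) (M : ℝ) (hu : ∀ k, |u k| ≤ M) {m n : ℕ}
    (hm : 1 ≤ m) (h1 : m ^ 2 ≤ n) (h2 : n < (m + 1) ^ 2) :
    |(n : ℝ)⁻¹ * ∑ k ∈ Finset.range n, u k
      - ((m ^ 2 : ℕ) : ℝ)⁻¹ * ∑ k ∈ Finset.range (m ^ 2), u k| ≤ 4 * M / m := by
  have hM0 : 0 ≤ M := le_trans (abs_nonneg _) (hu 0)
  set a : ℝ := ∑ k ∈ Finset.range n, u k with ha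
  set b : ℝ := ∑ k ∈ Finset.range (m ^ 2), u k with hbdef
  have hmR : (1 : ℝ) ≤ (m : ℝ) := by exact_mod_cast hm
  have hQpos : (0 : ℝ) < (m : ℝ) ^ 2 := by positivity
  have hNQ : ((m : ℝ) ^ 2) ≤ (n : ℝ) := by exact_mod_cast h1
  have hNpos : (0 : ℝ) < (n : ℝ) := lt_of_lt_of_le hQpos hNQ
  have hNup : (n : ℝ) ≤ (m : ℝ) ^ 2 + 2 * m := by
    have : n + 1 ≤ (m + 1) ^ 2 := h2
    have : (n : ℝ) + 1 ≤ ((m : ℝ) + 1) ^ 2 := by exact_mod_cast this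
    nlinarith
  -- bound on |b|
  have hb : |b| ≤ (m : ℝ) ^ 2 * M := by
    calc |b| ≤ ∑ k ∈ Finset.range (m ^ 2), |u k| := Finset.abs_sum_le_sum_abs _ _
    _ ≤ ∑ _k ∈ Finset.range (m ^ 2), M := Finset.sum_le_sum fun k _ => hu k
    _ = (m : ℝ) ^ 2 * M := by rw [Finset.sum_const, Finset.card_range, nsmul_eq_mul]; push_cast; ring
  -- bound on |a - b|
  have hab : |a - b| ≤ 2 * m * M := by
    have hsub : a - b = ∑ k ∈ Finset.Ico (m ^ 2) n, u k := by
      rw [ha, hbdef, ← Finset.sum_range_add_sum_Ico u h1]; ring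
    rw [hsub]
    calc |∑ k ∈ Finset.Ico (m ^ 2) n, u k| ≤ ∑ k ∈ Finset.Ico (m ^ 2) n, |u k| :=
          Finset.abs_sum_le_sum_abs _ _
    _ ≤ ∑ _k ∈ Finset.Ico (m ^ 2) n, M := Finset.sum_le_sum fun k _ => hu k
    _ = ((n - m ^ 2 : ℕ) : ℝ) * M := by
        rw [Finset.sum_const, Nat.card_Ico, nsmul_eq_mul]
    _ ≤ 2 * m * M := by
        apply mul_le_mul_of_nonneg_right _ hM0
        have : ((n - m ^ 2 : ℕ) : ℝ) = (n : ℝ) - (m : ℝ) ^ 2 := by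
          push_cast [Nat.cast_sub h1]; ring
        rw [this]; linarith
  have key : (n : ℝ)⁻¹ * a - ((m : ℝ) ^ 2)⁻¹ * b
      = (n : ℝ)⁻¹ * (a - b) + ((n : ℝ)⁻¹ - ((m : ℝ) ^ 2)⁻¹) * b := by ring
  have hcast : (((m ^ 2 : ℕ) : ℝ))⁻¹ = ((m : ℝ) ^ 2)⁻¹ := by push_cast; ring
  rw [hcast, key]
  have hinv : (n : ℝ)⁻¹ ≤ ((m : ℝ) ^ 2)⁻¹ := by
    apply inv_anti₀ hQpos hNQ
  have t1 : |(n : ℝ)⁻¹ * (a - b)| ≤ 2 * M / m := by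
    rw [abs_mul, abs_of_nonneg (inv_nonneg.2 hNpos.le)]
    calc (n : ℝ)⁻¹ * |a - b| ≤ ((m : ℝ) ^ 2)⁻¹ * (2 * m * M) := by
          apply mul_le_mul hinv hab (abs_nonneg _) (inv_nonneg.2 hQpos.le)
    _ = 2 * M / m := by field_simp
  have t2 : |((n : ℝ)⁻¹ - ((m : ℝ) ^ 2)⁻¹) * b| ≤ 2 * M / m := by
    rw [abs_mul]
    have hd : |(n : ℝ)⁻¹ - ((m : ℝ) ^ 2)⁻¹| = ((m : ℝ) ^ 2)⁻¹ - (n : ℝ)⁻¹ := by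
      rw [abs_sub_comm, abs_of_nonneg (by linarith)]
    rw [hd]
    calc (((m : ℝ) ^ 2)⁻¹ - (n : ℝ)⁻¹) * |b|
        ≤ (((m : ℝ) ^ 2)⁻¹ - (n : ℝ)⁻¹) * ((m : ℝ) ^ 2 * M) := by
          apply mul_le_mul_of_nonneg_left hb (by linarith)
    _ = (1 - (m : ℝ) ^ 2 / n) * M := by field_simp
    _ = (((n : ℝ) - (m : ℝ) ^ 2) / n) * M := by field_simp
    _ ≤ (2 * m / (m : ℝ) ^ 2) * M := by
        apply mul_le_mul_of_nonneg_right _ hM0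
        rw [div_le_div_iff₀ hNpos hQpos]
        nlinarith
    _ = 2 * M / m := by field_simp
  calc |(n : ℝ)⁻¹ * (a - b) + ((n : ℝ)⁻¹ - ((m : ℝ) ^ 2)⁻¹) * b|
      ≤ |(n : ℝ)⁻¹ * (a - b)| + |((n : ℝ)⁻¹ - ((m : ℝ) ^ 2)⁻¹) * b| := abs_add_le _ _
  _ ≤ 2 * M / m + 2 * M / m := add_le_add t1 t2
  _ = 4 * M / m := by ring

lemma nat_sqrt_tendsto : Filter.Tendsto Nat.sqrt Filter.atTop Filter.atTop := by
  apply Filter.tendsto_atTop_atTop.mpr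
  intro b
  exact ⟨b * b, fun n hn => Nat.le_sqrt.mpr hn⟩

/-- an `L²` rate of order `1/n` for the Birkhoff averages of a bounded
measurable observable implies almost-everywhere convergence of the averages. -/
theorem statement16 {X : Type*} [MeasurableSpace X] (μ : Measure X)
    [IsProbabilityMeasure μ]
    (T : X → X) (hT : Measurable T)
    (h : X → ℝ) (hh : Measurable h) (hb : ∃ M : ℝ, ∀ x, |h x| ≤ M)
    (g : X → ℝ) (hg : MemLp g 2 μ)
    (C : ℝ) (hC : 0 < C)
    (hrate : ∀ n : ℕ, 1 ≤ n →
      ∫ x, |(n : ℝ)⁻¹ * (∑ k ∈ Finset.range n, h (T^[k] x)) - g x| ^ 2 ∂μ ≤ C / n) :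
    ∀ᵐ x ∂μ, Filter.Tendsto
      (fun n : ℕ => (n : ℝ)⁻¹ * ∑ k ∈ Finset.range n, h (T^[k] x))
      Filter.atTop (nhds (g x)) := by
  obtain ⟨M₀, hM₀⟩ := hb
  set M : ℝ := max M₀ 0 with hMdef
  have hM : ∀ x, |h x| ≤ M := fun x => le_trans (hM₀ x) (le_max_left _ _)
  have hM0 : 0 ≤ M := le_max_right _ _
  -- the Birkhoff averages
  set A : ℕ → X → ℝ := fun n x => (n : ℝ)⁻¹ * ∑ k ∈ Finset.range n, h (T^[k] x) with hA
  have hAmeas : ∀ n, Measurable (A n) := by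
    intro n
    exact (Finset.measurable_sum _ fun k _ => hh.comp (hT.iterate k)).const_mul _
  have hAbd : ∀ n x, |A n x| ≤ M := by
    intro n x
    rcases Nat.eq_zero_or_pos n with rfl | hn
    · simpa [hA] using hM0
    · have hnR : (0 : ℝ) < n := by exact_mod_cast hn
      rw [hA]
      simp only
      rw [abs_mul, abs_of_nonneg (inv_nonneg.2 hnR.le)]
      calc (n : ℝ)⁻¹ * |∑ k ∈ Finset.range n, h (T^[k] x)|
          ≤ (n : ℝ)⁻¹ * ((n : ℝ) * M) := by
            apply mul_le_mul_of_nonneg_left _ (inv_nonneg.2 hnR.le)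
            calc |∑ k ∈ Finset.range n, h (T^[k] x)| ≤ ∑ k ∈ Finset.range n, |h (T^[k] x)| :=
                  Finset.abs_sum_le_sum_abs _ _
            _ ≤ ∑ _k ∈ Finset.range n, M := Finset.sum_le_sum fun k _ => hM _
            _ = (n : ℝ) * M := by rw [Finset.sum_const, Finset.card_range, nsmul_eq_mul]
      _ = M := by field_simp
  -- integrability of squared deviation
  have hdev : ∀ n, MemLp (fun x => A n x - g x) 2 μ := by
    intro n
    refine MemLp.sub ?_ hg
    exact MemLp.of_bound ((hAmeas n).aestronglyMeasurable) M
      (Filter.Eventually.of_forall fun x => by simpa [Real.norm_eq_abs] using hAbd n x)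
  have hint : ∀ n, Integrable (fun x => (A n x - g x) ^ 2) μ := fun n =>
    (hdev n).integrable_sq
  -- the ENNReal-valued squared deviations along squares
  set F : ℕ → X → ENNReal := fun m x => ENNReal.ofReal ((A ((m + 1) ^ 2) x - g x) ^ 2) with hF
  have hFmeas : ∀ m, AEMeasurable (F m) μ := by
    intro m
    exact (((hAmeas _).aemeasurable.sub hg.aestronglyMeasurable.aemeasurable).pow_const 2).ennreal_ofReal
  have hFint : ∀ m, ∫⁻ x, F m x ∂μ ≤ ENNReal.ofReal (C / ((m + 1) ^ 2 : ℕ)) := by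
    intro m
    have heq : ∫⁻ x, F m x ∂μ = ENNReal.ofReal (∫ x, (A ((m + 1) ^ 2) x - g x) ^ 2 ∂μ) := by
      rw [ofReal_integral_eq_lintegral_ofReal (hint _)
        (Filter.Eventually.of_forall fun x => sq_nonneg _)]
    rw [heq]
    apply ENNReal.ofReal_le_ofReal
    have h1 : 1 ≤ (m + 1) ^ 2 := Nat.one_le_pow _ _ (Nat.succ_pos m)
    have := hrate ((m + 1) ^ 2) h1
    calc ∫ x, (A ((m + 1) ^ 2) x - g x) ^ 2 ∂μ
        = ∫ x, |(((m + 1) ^ 2 : ℕ) : ℝ)⁻¹ * (∑ k ∈ Finset.range ((m + 1) ^ 2),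
            h (T^[k] x)) - g x| ^ 2 ∂μ := by
          congr 1; funext x; rw [sq_abs]
    _ ≤ C / ((m + 1) ^ 2 : ℕ) := this
  -- summability of the rate along squares
  have hsum : Summable (fun m : ℕ => C / (((m + 1) ^ 2 : ℕ) : ℝ)) := by
    have base : Summable (fun n : ℕ => 1 / (n : ℝ) ^ 2) :=
      Real.summable_one_div_nat_pow.mpr one_lt_two
    have base2 : Summable (fun n : ℕ => C * (1 / (n : ℝ) ^ 2)) := base.mul_left C
    have := (summable_nat_add_iff 1).mpr base2
    apply this.congr
    intro m
    push_cast
    ring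
  have hsum_ne : ∑' m, ∫⁻ x, F m x ∂μ ≠ ⊤ := by
    apply ne_top_of_le_ne_top _ (ENNReal.tsum_le_tsum hFint)
    rw [← ENNReal.ofReal_tsum_of_nonneg (fun m => by positivity) hsum]
    exact ENNReal.ofReal_ne_top
  have hlint : ∫⁻ x, ∑' m, F m x ∂μ ≠ ⊤ := by
    rw [lintegral_tsum hFmeas]; exact hsum_ne
  have hae := ae_lt_top' (AEMeasurable.ennreal_tsum hFmeas) hlint
  filter_upwards [hae] with x hx
  -- convergence of the ENNReal squared deviations
  have hF0 : Filter.Tendsto (fun m => F m x) Filter.atTop (nhds 0) :=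
    ENNReal.tendsto_atTop_zero_of_tsum_ne_top hx.ne
  -- convergence of the real squared deviations
  have hsq : Filter.Tendsto (fun m => (A ((m + 1) ^ 2) x - g x) ^ 2) Filter.atTop (nhds 0) := by
    have := (ENNReal.tendsto_toReal (by simp : (0 : ENNReal) ≠ ⊤)).comp hF0
    simp only [Function.comp_def, ENNReal.toReal_zero] at this
    apply this.congr
    intro m
    rw [hF, ENNReal.toReal_ofReal (sq_nonneg _)]
  -- convergence of the absolute deviations
  have habs : Filter.Tendsto (fun m => |A ((m + 1) ^ 2) x - g x|) Filter.atTop (nhds 0) := by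
    have := (Real.continuous_sqrt.tendsto 0).comp hsq
    simp only [Function.comp_def, Real.sqrt_zero] at this
    apply this.congr
    intro m
    rw [Real.sqrt_sq_eq_abs]
  have hBsucc : Filter.Tendsto (fun m => A ((m + 1) ^ 2) x) Filter.atTop (nhds (g x)) := by
    rw [tendsto_iff_dist_tendsto_zero]
    simpa [Real.dist_eq] using habs
  have hB : Filter.Tendsto (fun m => A (m ^ 2) x) Filter.atTop (nhds (g x)) :=
    (Filter.tendsto_add_atTop_iff_nat 1).mp hBsucc
  have hBsqrt : Filter.Tendsto (fun n => A (Nat.sqrt n ^ 2) x) Filter.atTop (nhds (g x)) :=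
    hB.comp nat_sqrt_tendsto
  -- squeeze
  have hdist2 : Filter.Tendsto (fun n => |A (Nat.sqrt n ^ 2) x - g x|) Filter.atTop (nhds 0) := by
    have := tendsto_iff_dist_tendsto_zero.mp hBsqrt
    simpa [Real.dist_eq] using this
  have hdiv : Filter.Tendsto (fun n : ℕ => 4 * M / (Nat.sqrt n : ℝ)) Filter.atTop (nhds 0) := by
    apply Filter.Tendsto.div_atTop tendsto_const_nhds
    exact tendsto_natCast_atTop_atTop.comp nat_sqrt_tendsto
  have hD : Filter.Tendsto
      (fun n : ℕ => 4 * M / (Nat.sqrt n : ℝ) + |A (Nat.sqrt n ^ 2) x - g x|)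
      Filter.atTop (nhds 0) := by
    simpa using hdiv.add hdist2
  have hsq0 : Filter.Tendsto (fun n => dist (A n x) (g x)) Filter.atTop (nhds 0) := by
    apply squeeze_zero' (Filter.Eventually.of_forall fun n => dist_nonneg)
      _ hD
    filter_upwards [Filter.eventually_ge_atTop 1] with n hn
    set m := Nat.sqrt n with hmdef
    have hm1 : 1 ≤ m := Nat.sqrt_pos.mpr hn
    have hle : m ^ 2 ≤ n := Nat.sqrt_le' n
    have hlt : n < (m + 1) ^ 2 := Nat.lt_succ_sqrt' n
    have hclose := avg_close (fun k => h (T^[k] x)) M (fun k => hM _) hm1 hle hlt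
    have h1 : dist (A n x) (g x) ≤ |A n x - A (m ^ 2) x| + |A (m ^ 2) x - g x| := by
      rw [Real.dist_eq]
      exact abs_sub_le _ _ _
    have h2 : |A n x - A (m ^ 2) x| ≤ 4 * M / m := hclose
    linarith [h1, h2]
  exact tendsto_iff_dist_tendsto_zero.mpr (by simpa using hsq0)
end
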